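/- Any nonzero limit h in C(c₀) of a sequence L(x_k) with x_k ∈ ℓ₁, where L is the spreading operator built from Dieudonné's field f(x)_n = √|x_n| + 1/(n+1), belongs to K(c₀): the equation u' = h(u) has no local solution in c₀. -/

import Mathlib

/-!
On each block `N i` the limit `h` acts coordinatewise as `h(y)ₙ = aᵢ (√|yₙ| + 1/(n+1))`, where
`aᵢ` is the limit of the `i`-th coefficients (read off at `y = 0`), and `h ≠ 0` forces some
`aᵢ ≠ 0`. The coordinates of a solution `u` of `u' = h(u)` tend to `0`, so some `n ∈ N i` has
`uₙ` small at two times `t₀ < t₁`. But a solution of the scalar equation `w' = a (√|w| + e)`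
that starts small has `√|w|` grow at rate `|a| / 2` whatever `e > 0` is, so it cannot be
small at `t₁` as well.
-/

open Filter Topology Set
open scoped ZeroAtInfty

theorem sqrt_add_mul_le_sqrt_of_mul_sqrt_le_deriv {w d : ℝ → ℝ} {α s₀ s₁ : ℝ} (hs : s₀ ≤ s₁)
    (hw : ContinuousOn w (Icc s₀ s₁)) (hpos : ∀ t ∈ Ioo s₀ s₁, 0 < w t)
    (hd : ∀ t ∈ Ioo s₀ s₁, HasDerivAt w (d t) t)
    (hle : ∀ t ∈ Ioo s₀ s₁, α * √(w t) ≤ d t) :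
    √(w s₀) + α / 2 * (s₁ - s₀) ≤ √(w s₁) := by
  have hsqrt : ∀ t ∈ Ioo s₀ s₁, HasDerivAt (fun s => √(w s)) (d t / (2 * √(w t))) t :=
    fun t ht => (hd t ht).sqrt (hpos t ht).ne'
  have key := (convex_Icc s₀ s₁).mul_sub_le_image_sub_of_le_deriv (f := fun s => √(w s))
    (Real.continuous_sqrt.comp_continuousOn hw)
    (fun t ht => (hsqrt t (by rwa [interior_Icc] at ht)).differentiableAt.differentiableWithinAt)
    (C := α / 2) (fun t ht => by
      rw [interior_Icc] at ht
      rw [(hsqrt t ht).deriv, le_div_iff₀ (by have := hpos t ht; positivity)]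
      linarith [hle t ht])
    s₀ (left_mem_Icc.2 hs) s₁ (right_mem_Icc.2 hs) hs
  linarith

/-- `√(-w)` decreases, then `√w` increases, at rate at least `α / 2`, independently of `e`;
`e > 0` only guarantees that `w` crosses `0`. -/
theorem le_sqrt_of_hasDerivAt_mul_sqrt_abs_add {w : ℝ → ℝ} {α e t₀ t₁ : ℝ} (hα : 0 < α)
    (he : 0 < e) (ht : t₀ < t₁)
    (hw : ∀ t ∈ Icc t₀ t₁, HasDerivAt w (α * (√|w t| + e)) t)
    (h₀ : √|w t₀| ≤ α * (t₁ - t₀) / 8) :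
    α * (t₁ - t₀) / 4 ≤ √(w t₁) := by
  obtain ⟨tm, h₀m, hm₁⟩ : ∃ tm, tm - t₀ = (t₁ - t₀) / 2 ∧ t₁ - tm = (t₁ - t₀) / 2 :=
    ⟨(t₀ + t₁) / 2, by ring, by ring⟩
  have hcont : ContinuousOn w (Icc t₀ t₁) := fun t ht => (hw t ht).continuousAt.continuousWithinAt
  have hmono : StrictMonoOn w (Icc t₀ t₁) := by
    refine strictMonoOn_of_deriv_pos (convex_Icc _ _) hcont fun t ht => ?_
    rw [interior_Icc] at ht
    rw [(hw t (Ioo_subset_Icc_self ht)).deriv]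
    positivity
  have hIcc₀ : Icc t₀ tm ⊆ Icc t₀ t₁ := Icc_subset_Icc_right (by linarith)
  have hIcc₁ : Icc tm t₁ ⊆ Icc t₀ t₁ := Icc_subset_Icc_left (by linarith)
  have htm : tm ∈ Icc t₀ t₁ := ⟨by linarith, by linarith⟩
  have hwtm : 0 ≤ w tm := by
    by_contra! hneg
    have hneg' : ∀ t ∈ Icc t₀ tm, w t < 0 := fun t ht =>
      (hmono.monotoneOn (hIcc₀ ht) htm ht.2).trans_lt hneg
    have hrefl : ∀ s ∈ Icc (-tm) (-t₀), -s ∈ Icc t₀ tm := fun s hs =>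
      ⟨by linarith [hs.2], by linarith [hs.1]⟩
    -- Run time backwards: `s ↦ -w (-s)` is positive on `[-tm, -t₀]` and grows like `α √·`.
    have hback := sqrt_add_mul_le_sqrt_of_mul_sqrt_le_deriv (w := fun s => -w (-s))
      (d := fun s => α * (√|w (-s)| + e)) (α := α) (s₀ := -tm) (s₁ := -t₀) (by linarith)
      ((hcont.comp continuous_neg.continuousOn fun s hs => hIcc₀ (hrefl s hs)).neg)
      (fun s hs => neg_pos.2 (hneg' _ (hrefl s (Ioo_subset_Icc_self hs))))
      (fun s hs => by
        simpa [Function.comp_def] using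
          ((hw (-s) (hIcc₀ (hrefl s (Ioo_subset_Icc_self hs)))).scomp s (hasDerivAt_neg s)).fun_neg)
      (fun s hs => by
        rw [abs_of_neg (hneg' (-s) (hrefl s (Ioo_subset_Icc_self hs)))]
        nlinarith)
    simp only [neg_neg] at hback
    rw [← abs_of_neg (hneg' t₀ ⟨le_rfl, by linarith⟩)] at hback
    nlinarith [Real.sqrt_nonneg (-w tm)]
  have hpos : ∀ t ∈ Ioo tm t₁, 0 < w t := fun t ht =>
    hwtm.trans_lt (hmono htm (hIcc₁ (Ioo_subset_Icc_self ht)) ht.1)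
  have hforward := sqrt_add_mul_le_sqrt_of_mul_sqrt_le_deriv (d := fun t => α * (√|w t| + e)) (α := α)
    (by linarith) (hcont.mono hIcc₁) hpos (fun t ht => hw t (hIcc₁ (Ioo_subset_Icc_self ht)))
    (fun t ht => by rw [abs_of_pos (hpos t ht)]; nlinarith)
  nlinarith [Real.sqrt_nonneg (w tm)]

theorem le_sqrt_abs_of_hasDerivAt_mul_sqrt_abs_add {w : ℝ → ℝ} {α e t₀ t₁ : ℝ} (hα : α ≠ 0)
    (he : 0 < e) (ht : t₀ < t₁)
    (hw : ∀ t ∈ Icc t₀ t₁, HasDerivAt w (α * (√|w t| + e)) t)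
    (h₀ : √|w t₀| ≤ |α| * (t₁ - t₀) / 8) :
    |α| * (t₁ - t₀) / 4 ≤ √|w t₁| := by
  rcases hα.lt_or_gt with hneg | hpos
  · have hw' : ∀ t ∈ Icc t₀ t₁, HasDerivAt (fun s => -w s) (-α * (√|-w t| + e)) t := fun t ht => by
      simpa [abs_neg, neg_mul] using (hw t ht).fun_neg
    rw [abs_of_neg hneg] at h₀ ⊢
    calc -α * (t₁ - t₀) / 4 ≤ √(-w t₁) :=
          le_sqrt_of_hasDerivAt_mul_sqrt_abs_add (neg_pos.2 hneg) he ht hw' (by rwa [abs_neg])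
      _ ≤ √|w t₁| := Real.sqrt_le_sqrt (neg_le_abs _)
  · rw [abs_of_pos hpos] at h₀ ⊢
    exact (le_sqrt_of_hasDerivAt_mul_sqrt_abs_add hpos he ht hw h₀).trans
      (Real.sqrt_le_sqrt (le_abs_self _))

namespace ZeroAtInftyContinuousMap

variable {α β : Type*} [TopologicalSpace α] [NormedAddCommGroup β]

theorem norm_apply_le (f : C₀(α, β)) (x : α) : ‖f x‖ ≤ ‖f‖ :=
  f.toBCF.norm_coe_le_norm x

variable (𝕜 : Type*) [NormedField 𝕜] [NormedSpace 𝕜 β] in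
noncomputable def evalCLM (x : α) : C₀(α, β) →L[𝕜] β :=
  LinearMap.mkContinuous
    { toFun := fun f => f x
      map_add' := fun _ _ => rfl
      map_smul' := fun _ _ => rfl } 1
    fun f => by simpa using norm_apply_le f x

theorem tendsto_cofinite [DiscreteTopology α] (f : C₀(α, β)) : Tendsto f cofinite (𝓝 0) := by
  simpa [cocompact_eq_cofinite] using zero_at_infty f

variable [NormedSpace ℝ β]

theorem tsum_apply {ι : Type*} {f : ι → C₀(α, β)} (hf : Summable f) (x : α) :
    (∑' i, f i) x = ∑' i, f i x :=
  (evalCLM ℝ x).map_tsum hf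

theorem hasDerivAt_apply {u : ℝ → C₀(α, β)} {u' : C₀(α, β)} {t : ℝ} (hu : HasDerivAt u u' t)
    (x : α) : HasDerivAt (fun s => u s x) (u' x) t :=
  ((evalCLM ℝ x : C₀(α, β) →L[ℝ] β).hasFDerivAt (x := u t)).comp_hasDerivAt t hu

theorem tendsto_apply {ι : Type*} {l : Filter ι} {F : ι → C₀(α, β)} {f : C₀(α, β)}
    (hF : Tendsto F l (𝓝 f)) (x : α) : Tendsto (fun i => F i x) l (𝓝 (f x)) :=
  ((evalCLM ℝ x).continuous.tendsto f).comp hF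

end ZeroAtInftyContinuousMap

open ZeroAtInftyContinuousMap

noncomputable def dieudonneField (y : ℕ → ℝ) (n : ℕ) : ℝ :=
  √|y n| + 1 / ((n : ℝ) + 1)

theorem dieudonneField_pos (y : ℕ → ℝ) (n : ℕ) : 0 < dieudonneField y n := by
  unfold dieudonneField
  positivity

theorem dieudonneField_le (y : C₀(ℕ, ℝ)) (n : ℕ) : dieudonneField y n ≤ √‖y‖ + 1 := by
  have hy : √|y n| ≤ √‖y‖ := Real.sqrt_le_sqrt (norm_apply_le y n)
  have hn : 1 / ((n : ℝ) + 1) ≤ 1 := by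
    rw [div_le_one (by positivity)]
    linarith [n.cast_nonneg (α := ℝ)]
  unfold dieudonneField
  linarith

theorem summable_smul_of_norm_le {E : Type*} [NormedAddCommGroup E] [NormedSpace ℝ E]
    [CompleteSpace E] (c : lp (fun _ : ℕ => ℝ) 1) {G : ℕ → E} {C : ℝ} (hG : ∀ i, ‖G i‖ ≤ C) :
    Summable fun i => c i • G i := by
  have hc : Summable fun i => ‖c i‖ := by
    simpa using (lp.memℓp c).summable (p := 1) one_pos
  exact (hc.mul_right C).of_norm_bounded fun i =>
    (norm_smul_le _ _).trans (mul_le_mul_of_nonneg_left (hG i) (norm_nonneg _))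

section Spreading

variable {N : ℕ → Set ℕ} {g : ℕ → C₀(ℕ, ℝ) → C₀(ℕ, ℝ)}

theorem norm_le_of_apply_eq_indicator_dieudonneField
    (hg : ∀ i y n, g i y n = (N i).indicator (dieudonneField y) n) (i : ℕ) (y : C₀(ℕ, ℝ)) :
    ‖g i y‖ ≤ √‖y‖ + 1 := by
  refine (BoundedContinuousFunction.norm_le (by positivity)).2 fun n => ?_
  change ‖g i y n‖ ≤ _
  by_cases hn : n ∈ N i
  · simpa [hg, hn, abs_of_pos (dieudonneField_pos y n)] using dieudonneField_le y n
  · simp only [hg, indicator_of_notMem hn, norm_zero]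
    positivity

theorem tsum_smul_apply_of_mem (hg : ∀ i y n, g i y n = (N i).indicator (dieudonneField y) n)
    (hdisj : Pairwise (Function.onFun Disjoint N)) (c : lp (fun _ : ℕ => ℝ) 1) (y : C₀(ℕ, ℝ))
    {i n : ℕ} (hn : n ∈ N i) : (∑' j, c j • g j y) n = c i * dieudonneField y n := by
  have hs : Summable fun j => c j • g j y :=
    summable_smul_of_norm_le c fun j => norm_le_of_apply_eq_indicator_dieudonneField hg j y
  rw [tsum_apply hs, tsum_eq_single i]
  · simp [hg, hn]
  · intro j hj
    simp [hg, Set.disjoint_left.1 (hdisj hj.symm) hn]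

theorem tsum_smul_apply_of_forall_notMem
    (hg : ∀ i y n, g i y n = (N i).indicator (dieudonneField y) n) (c : lp (fun _ : ℕ => ℝ) 1)
    (y : C₀(ℕ, ℝ)) {n : ℕ} (hn : ∀ i, n ∉ N i) : (∑' j, c j • g j y) n = 0 := by
  have hs : Summable fun j => c j • g j y :=
    summable_smul_of_norm_le c fun j => norm_le_of_apply_eq_indicator_dieudonneField hg j y
  rw [tsum_apply hs]
  simp [hg, hn]

theorem exists_ne_zero_forall_mem_apply_eq_mul_dieudonneField
    (hg : ∀ i y n, g i y n = (N i).indicator (dieudonneField y) n)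
    (hdisj : Pairwise (Function.onFun Disjoint N)) {x : ℕ → lp (fun _ : ℕ => ℝ) 1}
    {h : C₀(ℕ, ℝ) → C₀(ℕ, ℝ)} (hh : h ≠ 0)
    (hlim : ∀ y, Tendsto (fun k => ∑' i, x k i • g i y) atTop (𝓝 (h y))) :
    ∃ i, ∃ a ≠ 0, ∀ y : C₀(ℕ, ℝ), ∀ n ∈ N i, h y n = a * dieudonneField y n := by
  have hcoord : ∀ y n, Tendsto (fun k => (∑' i, x k i • g i y) n) atTop (𝓝 (h y n)) :=
    fun y => tendsto_apply (hlim y)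
  obtain ⟨y₀, n₀, hn₀⟩ : ∃ y n, h y n ≠ 0 := by
    by_contra! H
    exact hh (funext fun y => DFunLike.ext _ _ (H y))
  obtain ⟨i, hi⟩ : ∃ i, n₀ ∈ N i := by
    by_contra! H
    refine hn₀ (tendsto_nhds_unique (hcoord y₀ n₀) ?_)
    simp only [tsum_smul_apply_of_forall_notMem hg _ y₀ H, tendsto_const_nhds]
  have hlim_i : ∀ y : C₀(ℕ, ℝ), ∀ n ∈ N i,
      Tendsto (fun k => x k i * dieudonneField y n) atTop (𝓝 (h y n)) := fun y n hn => by
    simpa only [tsum_smul_apply_of_mem hg hdisj _ y hn] using hcoord y n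
  set a := h 0 n₀ / dieudonneField 0 n₀
  have hxa : Tendsto (fun k => x k i) atTop (𝓝 a) := by
    simpa [(dieudonneField_pos 0 n₀).ne'] using (hlim_i 0 n₀ hi).div_const (dieudonneField 0 n₀)
  have ha : ∀ y : C₀(ℕ, ℝ), ∀ n ∈ N i, h y n = a * dieudonneField y n := fun y n hn =>
    tendsto_nhds_unique (hlim_i y n hn) (hxa.mul_const _)
  refine ⟨i, a, fun ha0 => hn₀ ?_, ha⟩
  rw [ha y₀ n₀ hi, ha0, zero_mul]

end Spreading

theorem eventually_sqrt_abs_lt (f : C₀(ℕ, ℝ)) {ε : ℝ} (hε : 0 < ε) :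
    ∀ᶠ n in cofinite, √|f n| < ε := by
  have : Tendsto (fun n => √|f n|) cofinite (𝓝 0) := by
    simpa [Function.comp_def] using
      ((Real.continuous_sqrt.comp continuous_abs).tendsto 0).comp (tendsto_cofinite f)
  exact this.eventually_lt_const hε

theorem not_forall_hasDerivAt_of_apply_eq_mul_dieudonneField {S : Set ℕ} (hS : S.Infinite)
    {a : ℝ} (ha : a ≠ 0) {F : C₀(ℕ, ℝ) → C₀(ℕ, ℝ)}
    (hF : ∀ y, ∀ n ∈ S, F y n = a * dieudonneField y n) {t₀ t₁ : ℝ} (ht : t₀ < t₁)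
    (u : ℝ → C₀(ℕ, ℝ)) : ¬ ∀ t ∈ Icc t₀ t₁, HasDerivAt u (F (u t)) t := by
  intro hu
  have hε : 0 < |a| * (t₁ - t₀) / 8 := by
    have := abs_pos.2 ha
    have := sub_pos.2 ht
    positivity
  obtain ⟨n, ⟨hn₀, hn₁⟩, hnS⟩ := ((eventually_sqrt_abs_lt (u t₀) hε).and
    (eventually_sqrt_abs_lt (u t₁) hε)).and_frequently
    (Set.infinite_iff_frequently_cofinite.1 hS) |>.exists
  have hgrow := le_sqrt_abs_of_hasDerivAt_mul_sqrt_abs_add (w := fun s => u s n) ha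
    (by positivity : (0 : ℝ) < 1 / ((n : ℝ) + 1)) ht
    (fun t ht => hF (u t) n hnS ▸ hasDerivAt_apply (hu t ht) n) hn₀.le
  linarith

theorem stmt9_general (N : ℕ → Set ℕ) (hinf : ∀ i, (N i).Infinite)
    (hdisj : Pairwise (Function.onFun Disjoint N))
    (g : ℕ → ZeroAtInftyContinuousMap ℕ ℝ → ZeroAtInftyContinuousMap ℕ ℝ)
    (hg : ∀ (i : ℕ) (x : ZeroAtInftyContinuousMap ℕ ℝ) (n : ℕ),
      g i x n = Set.indicator (N i) (fun m => Real.sqrt |x m| + 1 / ((m : ℝ) + 1)) n)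
    (x : ℕ → lp (fun _ : ℕ => ℝ) 1)
    (h : ZeroAtInftyContinuousMap ℕ ℝ → ZeroAtInftyContinuousMap ℕ ℝ) (hh : h ≠ 0)
    (hconv : ∀ B : Set (ZeroAtInftyContinuousMap ℕ ℝ), Bornology.IsBounded B →
      TendstoUniformlyOn (fun k y => ∑' i, x k i • g i y) h atTop B) :
    ¬ ∃ (a b : ℝ) (_ : a < b) (u : ℝ → ZeroAtInftyContinuousMap ℕ ℝ),
      ∀ t ∈ Set.Ioo a b, HasDerivAt u (h (u t)) t := by
  obtain ⟨i, c, hc, hhc⟩ := exists_ne_zero_forall_mem_apply_eq_mul_dieudonneField hg hdisj hh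
    fun y => tendstoUniformlyOn_singleton_iff_tendsto.1 (hconv {y} Bornology.isBounded_singleton)
  rintro ⟨a, b, hab, u, hu⟩
  have hsub : Icc ((2 * a + b) / 3) ((a + 2 * b) / 3) ⊆ Ioo a b :=
    Icc_subset_Ioo (by linarith) (by linarith)
  exact not_forall_hasDerivAt_of_apply_eq_mul_dieudonneField (hinf i) hc hhc (by linarith) u
    fun t ht => hu t (hsub ht)

/-- Any nonzero limit `h`, uniformly on bounded subsets of `c₀`, of a sequence
`L(x_k)` with `x_k ∈ ℓ₁` (where `L` is the spreading operator built from
Dieudonné's field) belongs to `K(c₀)`: `u' = h(u)` has no local solution. -/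
theorem stmt9 (N : ℕ → Set ℕ) (hinf : ∀ i, (N i).Infinite)
    (hdisj : Pairwise (Function.onFun Disjoint N)) (hcov : (⋃ i, N i) = Set.univ)
    (g : ℕ → ZeroAtInftyContinuousMap ℕ ℝ → ZeroAtInftyContinuousMap ℕ ℝ)
    (hg : ∀ (i : ℕ) (x : ZeroAtInftyContinuousMap ℕ ℝ) (n : ℕ),
      g i x n = Set.indicator (N i) (fun m => Real.sqrt |x m| + 1 / ((m : ℝ) + 1)) n)
    (x : ℕ → lp (fun _ : ℕ => ℝ) 1)
    (h : ZeroAtInftyContinuousMap ℕ ℝ → ZeroAtInftyContinuousMap ℕ ℝ) (hh : h ≠ 0)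
    (hconv : ∀ B : Set (ZeroAtInftyContinuousMap ℕ ℝ), Bornology.IsBounded B →
      TendstoUniformlyOn (fun k y => ∑' i, x k i • g i y) h atTop B) :
    ¬ ∃ (a b : ℝ) (_ : a < b) (u : ℝ → ZeroAtInftyContinuousMap ℕ ℝ),
      ∀ t ∈ Set.Ioo a b, HasDerivAt u (h (u t)) t :=
  stmt9_general N hinf hdisj g hg x h hh hconv
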